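/- Let λ1 ≥ λ2 ≥ λ3 ≥ λ4 ≥ 0 be real numbers with λ1 + λ2 + λ3 + λ4 ≤ 1, let C = max{0, λ1−λ2−λ3−λ4}, and suppose C > 0. If the harmony H = max{0, −D} attains the value C(2+C)³/27, then λ1 + λ2 + λ3 + λ4 = 1. -/

import Mathlib

/-!
Write `x = λ1 − λ2 − λ3 − λ4` and `s = λ1 + λ2 + λ3 + λ4`. The first factor of the disharmony
is `−x`, and the other three factors are nonnegative with sum `2s + x`, so by AM–GM
`H ≤ x (2s + x)³ / 27`. When `C = x > 0` attains `C (2 + C)³ / 27`, this forces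
`(2 + C)³ ≤ (2s + C)³`, i.e. `s ≥ 1`.
-/

section

variable {α : Type*}

theorem twentyseven_mul_mul_le_add_add_pow_three [CommRing α] [LinearOrder α]
    [IsStrictOrderedRing α] {a b c : α} (ha : 0 ≤ a) (hb : 0 ≤ b) (hc : 0 ≤ c) :
    27 * (a * b * c) ≤ (a + b + c) ^ 3 := by
  nlinarith [sq_nonneg (a - b), sq_nonneg (b - c), sq_nonneg (a - c), mul_nonneg ha hb,
    mul_nonneg hb hc, mul_nonneg ha hc, sq_nonneg (a + b - 2 * c), sq_nonneg (b + c - 2 * a),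
    sq_nonneg (a + c - 2 * b)]

variable [Field α] [LinearOrder α] [IsStrictOrderedRing α]

def disharmony (l1 l2 l3 l4 : α) : α :=
  (-l1 + l2 + l3 + l4) * (l1 - l2 + l3 + l4) * (l1 + l2 - l3 + l4) * (l1 + l2 + l3 - l4)

def harmony (l1 l2 l3 l4 : α) : α :=
  max 0 (-disharmony l1 l2 l3 l4)

theorem harmony_le {l1 l2 l3 l4 : α} (h2 : 0 ≤ l2) (h3 : 0 ≤ l3) (h4 : 0 ≤ l4)
    (hx : 0 ≤ l1 - l2 - l3 - l4) :
    harmony l1 l2 l3 l4 ≤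
      (l1 - l2 - l3 - l4) * (2 * (l1 + l2 + l3 + l4) + (l1 - l2 - l3 - l4)) ^ 3 / 27 := by
  set x := l1 - l2 - l3 - l4
  have hsum : (l1 - l2 + l3 + l4) + (l1 + l2 - l3 + l4) + (l1 + l2 + l3 - l4)
      = 2 * (l1 + l2 + l3 + l4) + x := by ring
  have hamgm := twentyseven_mul_mul_le_add_add_pow_three
    (a := l1 - l2 + l3 + l4) (b := l1 + l2 - l3 + l4) (c := l1 + l2 + l3 - l4)
    (by linarith) (by linarith) (by linarith)
  rw [hsum] at hamgm
  have hsum_nonneg : 0 ≤ 2 * (l1 + l2 + l3 + l4) + x := by linarith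
  refine max_le (by positivity) ?_
  have hneg : -disharmony l1 l2 l3 l4
      = x * ((l1 - l2 + l3 + l4) * (l1 + l2 - l3 + l4) * (l1 + l2 + l3 - l4)) := by
    simp only [disharmony, x]; ring
  rw [hneg, le_div_iff₀ (by norm_num : (0 : α) < 27)]
  linear_combination mul_le_mul_of_nonneg_left hamgm hx

end

theorem sum_eq_one_of_harmony_maximal_general (l1 l2 l3 l4 : ℝ)
    (h23 : l3 ≤ l2) (h34 : l4 ≤ l3) (h4 : 0 ≤ l4)
    (hsum : l1 + l2 + l3 + l4 ≤ 1)
    (C D H : ℝ)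
    (hC : C = max 0 (l1 - l2 - l3 - l4))
    (hCpos : 0 < C)
    (hD : D = (-l1 + l2 + l3 + l4) * (l1 - l2 + l3 + l4) * (l1 + l2 - l3 + l4)
      * (l1 + l2 + l3 - l4))
    (hH : H = max 0 (-D))
    (hmax : H = C * (2 + C) ^ 3 / 27) :
    l1 + l2 + l3 + l4 = 1 := by
  have hCx : C = l1 - l2 - l3 - l4 := by
    rw [hC] at hCpos ⊢
    exact max_eq_right ((lt_max_iff.mp hCpos).resolve_left (lt_irrefl 0)).le
  have hbound : C * (2 + C) ^ 3 / 27 ≤ C * (2 * (l1 + l2 + l3 + l4) + C) ^ 3 / 27 := by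
    rw [← hmax, hH, hD, hCx]
    exact harmony_le (by linarith) (by linarith) h4 (by linarith)
  have hcube : (2 + C) ^ 3 ≤ (2 * (l1 + l2 + l3 + l4) + C) ^ 3 :=
    (mul_le_mul_iff_right₀ hCpos).mp ((div_le_div_iff_of_pos_right (by norm_num)).mp hbound)
  have := le_of_pow_le_pow_left₀ three_ne_zero (by linarith) hcube
  linarith

/-- With `λ1 ≥ λ2 ≥ λ3 ≥ λ4 ≥ 0`, `λ1+λ2+λ3+λ4 ≤ 1`,
`C = max{0, λ1−λ2−λ3−λ4} > 0`, `H = max{0, −D}`: if `H = C(2+C)³/27` then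
`λ1 + λ2 + λ3 + λ4 = 1`. -/
theorem sum_eq_one_of_harmony_maximal (l1 l2 l3 l4 : ℝ)
    (h12 : l2 ≤ l1) (h23 : l3 ≤ l2) (h34 : l4 ≤ l3) (h4 : 0 ≤ l4)
    (hsum : l1 + l2 + l3 + l4 ≤ 1)
    (C D H : ℝ)
    (hC : C = max 0 (l1 - l2 - l3 - l4))
    (hCpos : 0 < C)
    (hD : D = (-l1 + l2 + l3 + l4) * (l1 - l2 + l3 + l4) * (l1 + l2 - l3 + l4)
      * (l1 + l2 + l3 - l4))
    (hH : H = max 0 (-D))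
    (hmax : H = C * (2 + C) ^ 3 / 27) :
    l1 + l2 + l3 + l4 = 1 :=
  sum_eq_one_of_harmony_maximal_general l1 l2 l3 l4 h23 h34 h4 hsum C D H hC hCpos hD hH hmax
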